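/- (Characteristic function of Student's t-distribution.) For every ν > 2 and every t > 0, ∫_{-∞}^{∞} e^{itx} f_ν(x) dx = ((√ν · t)^{ν/2} / (Γ(ν/2) · 2^{ν/2 − 1})) · K_{ν/2}(√ν · t), where K_μ(x) = (1/2) ∫_0^{∞} u^{μ−1} e^{−x(u + u^{−1})/2} du is the modified Bessel function of the second kind given by its integral representation. -/

import Mathlib

open MeasureTheory Real Complex

/-- Student's t density with `ν` degrees of freedom. -/
noncomputable def studentDensity (ν x : ℝ) : ℝ :=
  (Real.Gamma ((ν + 1) / 2) / (Real.sqrt (Real.pi * ν) * Real.Gamma (ν / 2))) *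
    (1 + x ^ 2 / ν) ^ (-(ν + 1) / 2)

/-- The modified Bessel function of the second kind, via its integral representation. -/
noncomputable def besselK (μ x : ℝ) : ℝ :=
  (1 / 2) * ∫ u in Set.Ioi (0 : ℝ), u ^ (μ - 1) * Real.exp (-x * (u + u⁻¹) / 2)

/-!
Writing `s = (ν + 1) / 2`, the Gamma integral `r ^ (-s) = Γ(s)⁻¹ ∫₀^∞ u^(s-1) e^(-r u) du` with
`r = 1 + x² / ν` exhibits Student's density as a scale mixture of Gaussians `e^(-(u/ν) x²)`.
After Fubini, the Fourier transform of each Gaussian is `√(π ν / u) e^(-ν t² / (4 u))`, leaving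
`∫₀^∞ u^(ν/2 - 1) e^(-u - ν t² / (4 u)) du`, which the substitution `u = (√ν t / 2) v` turns into
the integral defining `K_{ν/2}(√ν t)`.
-/

open Set Function

variable {ν s : ℝ}

theorem rpow_neg_eq_inv_Gamma_mul_integral {r : ℝ} (hs : 0 < s) (hr : 0 < r) :
    r ^ (-s) = (Real.Gamma s)⁻¹ * ∫ u in Ioi (0 : ℝ), u ^ (s - 1) * rexp (-(r * u)) := by
  rw [Real.integral_rpow_mul_exp_neg_mul_Ioi hs hr, one_div, Real.inv_rpow hr.le,
    ← Real.rpow_neg hr.le]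
  field_simp [(Real.Gamma_pos_of_pos hs).ne']

theorem integrableOn_rpow_mul_exp_neg_mul {r : ℝ} (hs : 0 < s) (hr : 0 < r) :
    IntegrableOn (fun u : ℝ => u ^ (s - 1) * rexp (-(r * u))) (Ioi 0) := by
  simpa using integrableOn_rpow_mul_exp_neg_mul_rpow (p := 1) (s := s - 1) (by linarith)
    zero_lt_one hr

theorem integrable_one_add_sq_div_rpow_neg (hν : 0 < ν) (hs : 1 / 2 < s) :
    Integrable fun x : ℝ => (1 + x ^ 2 / ν) ^ (-s) := by
  have h := (integrable_rpow_neg_one_add_norm_sq (E := ℝ) (μ := volume) (r := 2 * s)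
    (by simp only [Module.finrank_self, Nat.cast_one]; linarith)).comp_div (Real.sqrt_pos.2 hν).ne'
  refine h.congr (ae_of_all _ fun x => ?_)
  simp only [norm_div, Real.norm_eq_abs, div_pow, sq_abs, Real.sq_sqrt hν.le]
  ring_nf

theorem integrable_uncurry_rpow_mul_exp_neg_one_add_sq_div_mul (hν : 0 < ν) (hs : 1 / 2 < s) :
    Integrable (uncurry fun x u : ℝ => u ^ (s - 1) * rexp (-((1 + x ^ 2 / ν) * u)))
      (volume.prod (volume.restrict (Ioi 0))) := by
  have hr (x : ℝ) : 0 < 1 + x ^ 2 / ν := by positivity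
  refine (integrable_prod_iff (by unfold uncurry; fun_prop)).2
    ⟨ae_of_all _ fun x => integrableOn_rpow_mul_exp_neg_mul (by linarith) (hr x), ?_⟩
  refine ((integrable_one_add_sq_div_rpow_neg hν hs).const_mul (Real.Gamma s)).congr
    (ae_of_all _ fun x => ?_)
  dsimp only [uncurry_apply_pair]
  rw [setIntegral_congr_fun measurableSet_Ioi fun u (hu : 0 < u) =>
      Real.norm_of_nonneg (by positivity),
    rpow_neg_eq_inv_Gamma_mul_integral (by linarith) (hr x)]
  field_simp [(Real.Gamma_pos_of_pos (by linarith : 0 < s)).ne']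

theorem integral_cexp_mul_exp_neg_mul_sq {b : ℝ} (hb : 0 < b) (t : ℝ) :
    ∫ x : ℝ, cexp (I * t * x) * (rexp (-(b * x ^ 2)) : ℂ) =
      (√(π / b) * rexp (-(t ^ 2 / (4 * b))) : ℝ) := by
  have h := fourierIntegral_gaussian (b := (b : ℂ)) (by simpa using hb) t
  push_cast at h ⊢
  rw [Real.sqrt_eq_rpow, Complex.ofReal_cpow (by positivity)]
  convert h using 3 <;> push_cast <;> ring_nf

theorem integral_cexp_mul_rpow_mul_exp_neg_one_add_sq_div_mul (hν : 0 < ν) (t : ℝ) {u : ℝ}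
    (hu : 0 < u) :
    ∫ x : ℝ, cexp (I * t * x) * ((u ^ (s - 1) * rexp (-((1 + x ^ 2 / ν) * u)) : ℝ) : ℂ) =
      ((√(π * ν) * (u ^ (s - 3 / 2) * rexp (-(u + ν * t ^ 2 / (4 * u)))) : ℝ) : ℂ) := by
  have hsplit (x : ℝ) : ((u ^ (s - 1) * rexp (-((1 + x ^ 2 / ν) * u)) : ℝ) : ℂ) =
      ((u ^ (s - 1) * rexp (-u) : ℝ) : ℂ) * (rexp (-(u / ν * x ^ 2)) : ℂ) := by
    rw [← Complex.ofReal_mul, mul_assoc, ← Real.exp_add]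
    congr 3
    ring
  simp_rw [hsplit, mul_left_comm (cexp _), integral_const_mul,
    integral_cexp_mul_exp_neg_mul_sq (div_pos hu hν), ← Complex.ofReal_mul]
  congr 1
  have hpow : u ^ (s - 1) = u ^ (s - 3 / 2) * √u := by
    rw [Real.sqrt_eq_rpow, ← Real.rpow_add hu]
    ring_nf
  rw [hpow, div_div_eq_mul_div, Real.sqrt_div' _ hu.le, mul_div_assoc, neg_add, Real.exp_add, show t ^ 2 / (4 * (u / ν)) = ν * (t ^ 2 / (4 * u)) by field_simp]
  field_simp [(Real.sqrt_pos.2 hu).ne']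

theorem integral_cexp_mul_one_add_sq_div_rpow_neg (hν : 0 < ν) (hs : 1 / 2 < s)
    (t : ℝ) :
    ∫ x : ℝ, cexp (I * t * x) * (((1 + x ^ 2 / ν) ^ (-s) : ℝ) : ℂ) =
      ((√(π * ν) / Real.Gamma s *
        ∫ u in Ioi (0 : ℝ), u ^ (s - 3 / 2) * rexp (-(u + ν * t ^ 2 / (4 * u))) : ℝ) : ℂ) := by
  have hmix (x : ℝ) : cexp (I * t * x) * (((1 + x ^ 2 / ν) ^ (-s) : ℝ) : ℂ) =
      ((Real.Gamma s)⁻¹ : ℂ) * ∫ u in Ioi (0 : ℝ),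
        cexp (I * t * x) * ((u ^ (s - 1) * rexp (-((1 + x ^ 2 / ν) * u)) : ℝ) : ℂ) := by
    rw [rpow_neg_eq_inv_Gamma_mul_integral (by linarith) (by positivity), Complex.ofReal_mul,
      ← integral_complex_ofReal, integral_const_mul, Complex.ofReal_inv]
    ring
  have hk : Integrable (uncurry fun x u : ℝ =>
      cexp (I * t * x) * ((u ^ (s - 1) * rexp (-((1 + x ^ 2 / ν) * u)) : ℝ) : ℂ))
      (volume.prod (volume.restrict (Ioi 0))) :=
    (integrable_uncurry_rpow_mul_exp_neg_one_add_sq_div_mul hν hs).ofReal.bdd_mul (c := 1)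
      (by fun_prop) (ae_of_all _ fun p => by simp [Complex.norm_exp])
  calc ∫ x : ℝ, cexp (I * t * x) * (((1 + x ^ 2 / ν) ^ (-s) : ℝ) : ℂ)
      = ((Real.Gamma s)⁻¹ : ℂ) * ∫ u in Ioi (0 : ℝ), ∫ x : ℝ,
          cexp (I * t * x) * ((u ^ (s - 1) * rexp (-((1 + x ^ 2 / ν) * u)) : ℝ) : ℂ) := by
        simp_rw [hmix]
        rw [integral_const_mul, integral_integral_swap hk]
    _ = ((Real.Gamma s)⁻¹ : ℂ) * ∫ u in Ioi (0 : ℝ),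
          ((√(π * ν) * (u ^ (s - 3 / 2) * rexp (-(u + ν * t ^ 2 / (4 * u)))) : ℝ) : ℂ) := by
        rw [setIntegral_congr_fun measurableSet_Ioi fun u hu =>
          integral_cexp_mul_rpow_mul_exp_neg_one_add_sq_div_mul hν t hu]
    _ = _ := by
        rw [integral_complex_ofReal, integral_const_mul]
        push_cast
        ring

theorem integral_rpow_mul_exp_neg_add_sq_div_eq_besselK (μ : ℝ) {a : ℝ} (ha : 0 < a) :
    ∫ u in Ioi (0 : ℝ), u ^ (μ - 1) * rexp (-(u + a ^ 2 / (4 * u))) =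
      2 * (a / 2) ^ μ * besselK μ a := by
  have ha2 : 0 < a / 2 := by positivity
  have hsub : ∀ v ∈ Ioi (0 : ℝ),
      (a / 2 * v) ^ (μ - 1) * rexp (-(a / 2 * v + a ^ 2 / (4 * (a / 2 * v)))) =
        (a / 2) ^ (μ - 1) * (v ^ (μ - 1) * rexp (-a * (v + v⁻¹) / 2)) := fun v (hv : 0 < v) => by
    rw [Real.mul_rpow ha2.le hv.le, mul_assoc]
    congr 3
    field_simp
    ring
  have hcov := integral_comp_mul_left_Ioi'
    (fun u => u ^ (μ - 1) * rexp (-(u + a ^ 2 / (4 * u)))) 0 ha2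
  rw [mul_zero] at hcov
  rw [← hcov, smul_eq_mul,
    setIntegral_congr_fun measurableSet_Ioi hsub, integral_const_mul, besselK,
    Real.rpow_sub_one ha2.ne']
  field_simp

theorem studentCharFun_eq_besselK (ν : ℝ) (hν : 2 < ν) (t : ℝ) (ht : 0 < t) :
    (∫ x : ℝ, Complex.exp (Complex.I * t * x) * (studentDensity ν x : ℂ)) =
      (((Real.sqrt ν * t) ^ (ν / 2) / (Real.Gamma (ν / 2) * (2 : ℝ) ^ (ν / 2 - 1)))
        * besselK (ν / 2) (Real.sqrt ν * t) : ℝ) := by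
  have hν0 : 0 < ν := by linarith
  have ha : 0 < √ν * t := by positivity
  have hΓ : Real.Gamma ((ν + 1) / 2) ≠ 0 := (Real.Gamma_pos_of_pos (by linarith)).ne'
  simp_rw [studentDensity, neg_div, Complex.ofReal_mul, mul_left_comm (cexp _), integral_const_mul,
    integral_cexp_mul_one_add_sq_div_rpow_neg hν0 (by linarith : 1 / 2 < (ν + 1) / 2) t]
  rw [show (ν + 1) / 2 - 3 / 2 = ν / 2 - 1 by ring, show ν * t ^ 2 = (√ν * t) ^ 2 by
    rw [mul_pow, Real.sq_sqrt hν0.le], integral_rpow_mul_exp_neg_add_sq_div_eq_besselK _ ha,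
    Real.div_rpow ha.le zero_le_two, Real.rpow_sub_one two_ne_zero]
  norm_cast
  field_simp
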